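/- arXiv:2406.18534 — 10 statements merged into one kernel-verified Lean document; each statement's English description precedes it below -/
import Mathlib

section
/- With the attribute setup below, assume the family v is pairwise orthogonal. Then for every i ∈ {1,…,l} and j ∈ {1,…,l'}, the centered base-concept representations from the two attributes satisfy the exact identity σ²·l·l'·⟨u_i, u'_j⟩ = ‖v(i,j)‖² − (1/l')·∑_{s=1}^{l'} ‖v(i,s)‖² − (1/l)·∑_{t=1}^{l} ‖v(t,j)‖² + (1/(l·l'))·∑_{t=1}^{l}∑_{s=1}^{l'} ‖v(t,s)‖². -/
open scoped InnerProductSpace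
open Finset

theorem stmt_4
    {d l l' : ℕ} (hd : 1 ≤ d) (hl : 1 ≤ l) (hl' : 1 ≤ l')
    (σ : ℝ) (hσ : 0 < σ)
    (v : Fin l → Fin l' → EuclideanSpace ℝ (Fin d))
    (vhat : Fin l → EuclideanSpace ℝ (Fin d))
    (vhat' : Fin l' → EuclideanSpace ℝ (Fin d))
    (μ : EuclideanSpace ℝ (Fin d))
    (u : Fin l → EuclideanSpace ℝ (Fin d))
    (u' : Fin l' → EuclideanSpace ℝ (Fin d))
    (hvhat : ∀ i, vhat i = (1 / (l' : ℝ)) • ∑ j, v i j)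
    (hvhat' : ∀ j, vhat' j = (1 / (l : ℝ)) • ∑ i, v i j)
    (hμ : μ = (1 / ((l : ℝ) * (l' : ℝ))) • ∑ i, ∑ j, v i j)
    (hu : ∀ i, u i = (1 / σ) • (vhat i - μ))
    (hu' : ∀ j, u' j = (1 / σ) • (vhat' j - μ))
    (horth : ∀ i j i' j', (i, j) ≠ (i', j') → ⟪v i j, v i' j'⟫_ℝ = 0)
    : ∀ i j, σ ^ 2 * (l : ℝ) * (l' : ℝ) * ⟪u i, u' j⟫_ℝ =
      ‖v i j‖ ^ 2 - (1 / (l' : ℝ)) * ∑ s, ‖v i s‖ ^ 2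
        - (1 / (l : ℝ)) * ∑ t, ‖v t j‖ ^ 2
        + (1 / ((l : ℝ) * (l' : ℝ))) * ∑ t, ∑ s, ‖v t s‖ ^ 2 := by
  intro i j
  have key : ∀ a b, ⟪v a b, ∑ t, ∑ s, v t s⟫_ℝ = ‖v a b‖ ^ 2 := by
    intro a b
    rw [inner_sum, Finset.sum_eq_single a]
    · rw [inner_sum, Finset.sum_eq_single b]
      · exact real_inner_self_eq_norm_sq _
      · intro s _ hs
        exact horth a b a s (fun h => hs (congrArg Prod.snd h).symm)
      · simp
    · intro t _ ht
      rw [inner_sum]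
      exact Finset.sum_eq_zero fun s _ => horth a b t s (fun h => ht (congrArg Prod.fst h).symm)
    · simp
  have hA : ⟪∑ s, v i s, ∑ t, v t j⟫_ℝ = ‖v i j‖ ^ 2 := by
    rw [sum_inner, Finset.sum_eq_single j]
    · rw [inner_sum, Finset.sum_eq_single i]
      · exact real_inner_self_eq_norm_sq _
      · intro t _ ht
        exact horth i j t j (fun h => ht (congrArg Prod.fst h).symm)
      · simp
    · intro s _ hs
      rw [inner_sum]
      exact Finset.sum_eq_zero fun t _ => horth i s t j (fun h => hs (congrArg Prod.snd h))
    · simp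
  have hB : ⟪∑ s, v i s, ∑ t, ∑ s, v t s⟫_ℝ = ∑ s, ‖v i s‖ ^ 2 := by
    rw [sum_inner]
    exact Finset.sum_congr rfl fun s _ => key i s
  have hC : ⟪∑ t, ∑ s, v t s, ∑ t, v t j⟫_ℝ = ∑ t, ‖v t j‖ ^ 2 := by
    rw [real_inner_comm, sum_inner]
    exact Finset.sum_congr rfl fun t _ => key t j
  have hD : ⟪∑ t, ∑ s, v t s, ∑ t, ∑ s, v t s⟫_ℝ = ∑ t, ∑ s, ‖v t s‖ ^ 2 := by
    rw [sum_inner]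
    refine Finset.sum_congr rfl fun t _ => ?_
    rw [sum_inner]
    exact Finset.sum_congr rfl fun s _ => key t s
  have hl0 : (l : ℝ) ≠ 0 := by positivity
  have hl'0 : (l' : ℝ) ≠ 0 := by positivity
  have hσ0 : σ ≠ 0 := ne_of_gt hσ
  rw [hu, hu', hvhat, hvhat', hμ]
  simp only [inner_sub_left, inner_sub_right, real_inner_smul_left, real_inner_smul_right]
  rw [hA, hB, hC, hD]
  field_simp
  ring
end

section
/- With the attribute setup below, assume the family v is pairwise orthogonal and all vectors v(i,j) have the same norm c. Then for every i ∈ {1,…,l} and j ∈ {1,…,l'}, the centered base-concept representations from the two different attributes are exactly orthogonal: ⟨u_i, u'_j⟩ = 0. (This is the exact, idealized form of the statement that base-concept representations from different attributes are orthogonal.) -/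
/-!
Index the composite concepts by pairs `p = (i, j)`. Each averaged representation is the mean of
the family over a set of pairs: `v̂ i` over the row `{i} × univ`, `v̂' j` over the column
`univ × {j}`, and `μ` over all pairs. For an orthogonal family of common norm `c` the inner
product of two such sums is `c ^ 2` times the size of the overlap of the index sets, so the
centered means over `s` and `t` are orthogonal whenever `s` and `t` are independent events
for the uniform distribution on pairs, `#(s ∩ t) * #univ = #s * #t`, as a row and a column are.
-/

open scoped InnerProductSpace
open Finset

section OrthogonalFamily

variable {E ι : Type*} [NormedAddCommGroup E] [InnerProductSpace ℝ E] [DecidableEq ι]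
  {w : ι → E} {c : ℝ}

theorem inner_sum_sum_eq_sq_mul_card_inter
    (horth : Pairwise fun a b => ⟪w a, w b⟫_ℝ = 0) (hc : ∀ k, ‖w k‖ = c) (s t : Finset ι) :
    ⟪∑ k ∈ s, w k, ∑ k ∈ t, w k⟫_ℝ = c ^ 2 * #(s ∩ t) := by
  have hgram : ∀ a b, ⟪w a, w b⟫_ℝ = if a = b then c ^ 2 else 0 := by
    intro a b
    split_ifs with hab
    · rw [hab, real_inner_self_eq_norm_sq, hc]
    · exact horth hab
  simp_rw [sum_inner, inner_sum, hgram, sum_ite_eq]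
  rw [← sum_filter, filter_mem_eq_inter, sum_const, nsmul_eq_mul, mul_comm]

theorem inner_centered_mean_eq_zero [Fintype ι]
    (horth : Pairwise fun a b => ⟪w a, w b⟫_ℝ = 0) (hc : ∀ k, ‖w k‖ = c)
    {s t : Finset ι} (hs : s.Nonempty) (ht : t.Nonempty)
    (hindep : #(s ∩ t) * Fintype.card ι = #s * #t) :
    ⟪(#s : ℝ)⁻¹ • ∑ k ∈ s, w k - (Fintype.card ι : ℝ)⁻¹ • ∑ k, w k,
      (#t : ℝ)⁻¹ • ∑ k ∈ t, w k - (Fintype.card ι : ℝ)⁻¹ • ∑ k, w k⟫_ℝ = 0 := by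
  have hs0 : (#s : ℝ) ≠ 0 := by exact_mod_cast hs.card_ne_zero
  have ht0 : (#t : ℝ) ≠ 0 := by exact_mod_cast ht.card_ne_zero
  have hN0 : (Fintype.card ι : ℝ) ≠ 0 := by
    exact_mod_cast (Fintype.card_pos_iff.mpr ⟨hs.choose⟩).ne'
  have hindep' : (#(s ∩ t) : ℝ) * Fintype.card ι = #s * #t := by exact_mod_cast hindep
  simp only [inner_sub_left, inner_sub_right, real_inner_smul_left, real_inner_smul_right,
    inner_sum_sum_eq_sq_mul_card_inter horth hc, inter_univ, univ_inter, card_univ]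
  field_simp
  linear_combination c ^ 2 * hindep'

end OrthogonalFamily

theorem stmt_5_general
    {d l l' : ℕ}
    (σ : ℝ)
    (v : Fin l → Fin l' → EuclideanSpace ℝ (Fin d))
    (vhat : Fin l → EuclideanSpace ℝ (Fin d))
    (vhat' : Fin l' → EuclideanSpace ℝ (Fin d))
    (μ : EuclideanSpace ℝ (Fin d))
    (u : Fin l → EuclideanSpace ℝ (Fin d))
    (u' : Fin l' → EuclideanSpace ℝ (Fin d))
    (hvhat : ∀ i, vhat i = (1 / (l' : ℝ)) • ∑ j, v i j)
    (hvhat' : ∀ j, vhat' j = (1 / (l : ℝ)) • ∑ i, v i j)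
    (hμ : μ = (1 / ((l : ℝ) * (l' : ℝ))) • ∑ i, ∑ j, v i j)
    (hu : ∀ i, u i = (1 / σ) • (vhat i - μ))
    (hu' : ∀ j, u' j = (1 / σ) • (vhat' j - μ))
    (horth : ∀ i j i' j', (i, j) ≠ (i', j') → ⟪v i j, v i' j'⟫_ℝ = 0)
    (c : ℝ) (hc : ∀ i j, ‖v i j‖ = c)
    : ∀ i j, ⟪u i, u' j⟫_ℝ = 0 := by
  intro i j
  have hmeans := inner_centered_mean_eq_zero (w := fun p : Fin l × Fin l' => v p.1 p.2)
    (fun p q hpq => horth p.1 p.2 q.1 q.2 hpq) (fun p => hc p.1 p.2)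
    (s := {i} ×ˢ univ) (t := univ ×ˢ {j}) ⟨(i, j), by simp⟩ ⟨(i, j), by simp⟩
    (by rw [product_inter_product]; simp [mul_comm])
  simp only [sum_product, sum_singleton, Fintype.sum_prod_type, card_product, card_singleton,
    card_univ, Fintype.card_prod, Fintype.card_fin, one_mul, mul_one, Nat.cast_mul] at hmeans
  rw [hu, hu', hvhat, hvhat', hμ, real_inner_smul_left, real_inner_smul_right]
  simp only [one_div, hmeans, mul_zero]

theorem stmt_5
    {d l l' : ℕ} (hd : 1 ≤ d) (hl : 1 ≤ l) (hl' : 1 ≤ l')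
    (σ : ℝ) (hσ : 0 < σ)
    (v : Fin l → Fin l' → EuclideanSpace ℝ (Fin d))
    (vhat : Fin l → EuclideanSpace ℝ (Fin d))
    (vhat' : Fin l' → EuclideanSpace ℝ (Fin d))
    (μ : EuclideanSpace ℝ (Fin d))
    (u : Fin l → EuclideanSpace ℝ (Fin d))
    (u' : Fin l' → EuclideanSpace ℝ (Fin d))
    (hvhat : ∀ i, vhat i = (1 / (l' : ℝ)) • ∑ j, v i j)
    (hvhat' : ∀ j, vhat' j = (1 / (l : ℝ)) • ∑ i, v i j)
    (hμ : μ = (1 / ((l : ℝ) * (l' : ℝ))) • ∑ i, ∑ j, v i j)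
    (hu : ∀ i, u i = (1 / σ) • (vhat i - μ))
    (hu' : ∀ j, u' j = (1 / σ) • (vhat' j - μ))
    (horth : ∀ i j i' j', (i, j) ≠ (i', j') → ⟪v i j, v i' j'⟫_ℝ = 0)
    (c : ℝ) (hc : ∀ i j, ‖v i j‖ = c)
    : ∀ i j, ⟪u i, u' j⟫_ℝ = 0 :=
  stmt_5_general σ v vhat vhat' μ u u' hvhat hvhat' hμ hu hu' horth c hc
end

section
/- With the attribute setup below, assume the family v is pairwise orthogonal and all vectors v(i,j) have the same norm c. Then for every i ∈ {1,…,l} and j ∈ {1,…,l'}, the squared norms of the centered base-concept representations are ‖u_i‖² = c²·(l−1)/(σ²·l·l') and ‖u'_j‖² = c²·(l'−1)/(σ²·l·l'). -/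
/-!
An orthogonal family of vectors of common norm `c` has Gram matrix `c² • 1`, so the inner product
of two partial sums over index sets `s`, `t` is `c² · #(s ∩ t)`. Expanding `‖v̂ᵢ - μ‖²` with the
row `{i} × univ` and the whole grid gives `c² (1/l' - 2/(l l') + 1/(l l'))`; the statement for
`u'` is the one for `u` applied to the transposed family.
-/

open scoped InnerProductSpace
open Finset

section OrthogonalFamily

variable {E ι : Type*} [NormedAddCommGroup E] [InnerProductSpace ℝ E]
  {f : ι → E} {c : ℝ}

theorem inner_eq_ite_of_pairwise_orthogonal [DecidableEq ι]
    (horth : Pairwise fun p q => ⟪f p, f q⟫_ℝ = 0) (hc : ∀ p, ‖f p‖ = c) (p q : ι) :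
    ⟪f p, f q⟫_ℝ = if p = q then c ^ 2 else 0 := by
  split_ifs with hpq
  · rw [hpq, real_inner_self_eq_norm_sq, hc]
  · exact horth hpq

theorem inner_sum_sum_of_pairwise_orthogonal [DecidableEq ι]
    (horth : Pairwise fun p q => ⟪f p, f q⟫_ℝ = 0) (hc : ∀ p, ‖f p‖ = c) (s t : Finset ι) :
    ⟪∑ p ∈ s, f p, ∑ q ∈ t, f q⟫_ℝ = #(s ∩ t) * c ^ 2 := by
  simp_rw [sum_inner, inner_sum, inner_eq_ite_of_pairwise_orthogonal horth hc, sum_ite_eq,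
    sum_ite_mem, sum_const, nsmul_eq_mul]

end OrthogonalFamily

theorem norm_sq_rowMean_sub_mean {E α β : Type*} [NormedAddCommGroup E] [InnerProductSpace ℝ E]
    [Fintype α] [Fintype β] {v : α → β → E} {c : ℝ}
    (horth : Pairwise fun p q : α × β => ⟪v p.1 p.2, v q.1 q.2⟫_ℝ = 0)
    (hc : ∀ i j, ‖v i j‖ = c) (i : α) :
    ‖(1 / (Fintype.card β : ℝ)) • ∑ j, v i j
        - (1 / ((Fintype.card α : ℝ) * Fintype.card β)) • ∑ i, ∑ j, v i j‖ ^ 2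
      = c ^ 2 * ((Fintype.card α : ℝ) - 1) / ((Fintype.card α : ℝ) * Fintype.card β) := by
  classical
  rcases isEmpty_or_nonempty β with _ | _
  · simp -- both sides are `0`, the right one through `x / 0 = 0`
  have : Nonempty α := ⟨i⟩
  have hα : (Fintype.card α : ℝ) ≠ 0 := Nat.cast_ne_zero.mpr Fintype.card_ne_zero
  have hβ : (Fintype.card β : ℝ) ≠ 0 := Nat.cast_ne_zero.mpr Fintype.card_ne_zero
  have hrow : ∑ j, v i j = ∑ p ∈ {i} ×ˢ univ, v p.1 p.2 := by
    rw [sum_product, sum_singleton]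
  have hall : ∑ i, ∑ j, v i j = ∑ p : α × β, v p.1 p.2 := by
    rw [← univ_product_univ, sum_product]
  have hgram := inner_sum_sum_of_pairwise_orthogonal (f := fun p : α × β => v p.1 p.2) horth
    (fun p => hc p.1 p.2)
  rw [← real_inner_self_eq_norm_sq, hrow, hall]
  simp only [inner_sub_left, inner_sub_right, real_inner_smul_left, real_inner_smul_right, hgram,
    inter_self, inter_univ, univ_inter, card_product, card_singleton, card_univ, one_mul,
    Fintype.card_prod, Nat.cast_mul]
  field_simp
  ring

theorem stmt_6_general
    {d l l' : ℕ}
    (σ : ℝ)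
    (v : Fin l → Fin l' → EuclideanSpace ℝ (Fin d))
    (vhat : Fin l → EuclideanSpace ℝ (Fin d))
    (vhat' : Fin l' → EuclideanSpace ℝ (Fin d))
    (μ : EuclideanSpace ℝ (Fin d))
    (u : Fin l → EuclideanSpace ℝ (Fin d))
    (u' : Fin l' → EuclideanSpace ℝ (Fin d))
    (hvhat : ∀ i, vhat i = (1 / (l' : ℝ)) • ∑ j, v i j)
    (hvhat' : ∀ j, vhat' j = (1 / (l : ℝ)) • ∑ i, v i j)
    (hμ : μ = (1 / ((l : ℝ) * (l' : ℝ))) • ∑ i, ∑ j, v i j)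
    (hu : ∀ i, u i = (1 / σ) • (vhat i - μ))
    (hu' : ∀ j, u' j = (1 / σ) • (vhat' j - μ))
    (horth : ∀ i j i' j', (i, j) ≠ (i', j') → ⟪v i j, v i' j'⟫_ℝ = 0)
    (c : ℝ) (hc : ∀ i j, ‖v i j‖ = c)
    : (∀ i, ‖u i‖ ^ 2 = c ^ 2 * ((l : ℝ) - 1) / (σ ^ 2 * (l : ℝ) * (l' : ℝ))) ∧
      (∀ j, ‖u' j‖ ^ 2 = c ^ 2 * ((l' : ℝ) - 1) / (σ ^ 2 * (l : ℝ) * (l' : ℝ))) := by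
  have hscale (x : EuclideanSpace ℝ (Fin d)) : ‖(1 / σ) • x‖ ^ 2 = ‖x‖ ^ 2 / σ ^ 2 := by
    rw [norm_smul, mul_pow, Real.norm_eq_abs, sq_abs, div_pow, one_pow, one_div_mul_eq_div]
  have hrows := norm_sq_rowMean_sub_mean (fun p q h => horth p.1 p.2 q.1 q.2 h) hc
  have hcols := norm_sq_rowMean_sub_mean (v := fun j i => v i j)
    (fun p q h => horth p.2 p.1 q.2 q.1 (Prod.swap_injective.ne h)) (fun j i => hc i j)
  simp only [Fintype.card_fin] at hrows hcols
  constructor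
  · intro i
    rw [hu, hvhat, hμ, hscale, hrows]
    ring
  · intro j
    rw [hu', hvhat', hμ, sum_comm, mul_comm (l : ℝ), hscale, hcols]
    ring

theorem stmt_6
    {d l l' : ℕ} (hd : 1 ≤ d) (hl : 1 ≤ l) (hl' : 1 ≤ l')
    (σ : ℝ) (hσ : 0 < σ)
    (v : Fin l → Fin l' → EuclideanSpace ℝ (Fin d))
    (vhat : Fin l → EuclideanSpace ℝ (Fin d))
    (vhat' : Fin l' → EuclideanSpace ℝ (Fin d))
    (μ : EuclideanSpace ℝ (Fin d))
    (u : Fin l → EuclideanSpace ℝ (Fin d))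
    (u' : Fin l' → EuclideanSpace ℝ (Fin d))
    (hvhat : ∀ i, vhat i = (1 / (l' : ℝ)) • ∑ j, v i j)
    (hvhat' : ∀ j, vhat' j = (1 / (l : ℝ)) • ∑ i, v i j)
    (hμ : μ = (1 / ((l : ℝ) * (l' : ℝ))) • ∑ i, ∑ j, v i j)
    (hu : ∀ i, u i = (1 / σ) • (vhat i - μ))
    (hu' : ∀ j, u' j = (1 / σ) • (vhat' j - μ))
    (horth : ∀ i j i' j', (i, j) ≠ (i', j') → ⟪v i j, v i' j'⟫_ℝ = 0)
    (c : ℝ) (hc : ∀ i j, ‖v i j‖ = c)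
    : (∀ i, ‖u i‖ ^ 2 = c ^ 2 * ((l : ℝ) - 1) / (σ ^ 2 * (l : ℝ) * (l' : ℝ))) ∧
      (∀ j, ‖u' j‖ ^ 2 = c ^ 2 * ((l' : ℝ) - 1) / (σ ^ 2 * (l : ℝ) * (l' : ℝ))) :=
  stmt_6_general σ v vhat vhat' μ u u' hvhat hvhat' hμ hu hu' horth c hc
end

section
/- With the attribute setup below, assume the family v is pairwise orthogonal and all vectors v(i,j) have the same norm c. Then for any two distinct indices i ≠ i' in {1,…,l}, the centered representations of two base concepts from the same attribute satisfy ⟨u_i, u_{i'}⟩ = −c²/(σ²·l·l'). In particular, if c > 0, base-concept representations within the same attribute are non-orthogonal. -/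
/-!
Both the block means `vhat i` and their mean `μ` are linear combinations of the orthogonal
family `v`, so every inner product reduces to a count: the `vhat i` are themselves orthogonal
with `‖vhat i‖² = c² / l'`, and for any orthogonal family `x` of `n` vectors of equal squared
norm `s` with mean `m`, expanding `⟪x i - m, x i' - m⟫` leaves `0 - s/n - s/n + s/n = -s/n`.
-/

open scoped InnerProductSpace
open Finset

section OrthogonalFamily

variable {E : Type*} [NormedAddCommGroup E] [InnerProductSpace ℝ E]

theorem real_inner_eq_ite_of_pairwise_orthogonal {α : Type*} [DecidableEq α] {x : α → E}
    (horth : Pairwise fun a b => ⟪x a, x b⟫_ℝ = 0) {c : ℝ} (hc : ∀ a, ‖x a‖ = c) (a b : α) :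
    ⟪x a, x b⟫_ℝ = if a = b then c ^ 2 else 0 := by
  split_ifs with hab
  · rw [hab, real_inner_self_eq_norm_sq, hc]
  · exact horth hab

theorem real_inner_blockMean_blockMean {ι κ : Type*} [DecidableEq ι] [DecidableEq κ] [Fintype κ]
    {v : ι → κ → E} {s : ℝ}
    (hv : ∀ i j i' j', ⟪v i j, v i' j'⟫_ℝ = if (i, j) = (i', j') then s else 0) (i i' : ι) :
    ⟪(1 / (Fintype.card κ : ℝ)) • ∑ j, v i j, (1 / (Fintype.card κ : ℝ)) • ∑ j, v i' j⟫_ℝ =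
      if i = i' then s / Fintype.card κ else 0 := by
  have hblock : ⟪∑ j, v i j, ∑ j, v i' j⟫_ℝ = if i = i' then Fintype.card κ * s else 0 := by
    simp only [sum_inner, inner_sum, hv, Prod.mk.injEq]
    split_ifs with hii' <;> simp [hii']
  rw [real_inner_smul_left, real_inner_smul_right, hblock]
  split_ifs
  · rcases eq_or_ne (Fintype.card κ : ℝ) 0 with hn | hn
    · simp [hn]
    · field_simp
  · ring

theorem real_inner_sub_mean_sub_mean {ι : Type*} [DecidableEq ι] [Fintype ι] {x : ι → E} {s : ℝ}
    (hx : ∀ k k', ⟪x k, x k'⟫_ℝ = if k = k' then s else 0) {i i' : ι} (hii' : i ≠ i') :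
    ⟪x i - (1 / (Fintype.card ι : ℝ)) • ∑ k, x k,
        x i' - (1 / (Fintype.card ι : ℝ)) • ∑ k, x k⟫_ℝ = -s / Fintype.card ι := by
  have hn : (Fintype.card ι : ℝ) ≠ 0 := Nat.cast_ne_zero.mpr (Fintype.card_pos_iff.mpr ⟨i⟩).ne'
  have hx_sum : ∀ k, ⟪x k, ∑ k', x k'⟫_ℝ = s := by simp [inner_sum, hx]
  have hsum_x : ∀ k, ⟪∑ k', x k', x k⟫_ℝ = s := fun k => by rw [real_inner_comm, hx_sum]
  have hsum_sum : ⟪∑ k, x k, ∑ k', x k'⟫_ℝ = Fintype.card ι * s := by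
    simp only [sum_inner, hx_sum, sum_const, card_univ, nsmul_eq_mul]
  simp only [inner_sub_left, inner_sub_right, real_inner_smul_left, real_inner_smul_right,
    hx, if_neg hii', hx_sum, hsum_x, hsum_sum]
  field_simp
  ring

end OrthogonalFamily

theorem stmt_7_general
    {d l l' : ℕ} (hl' : 1 ≤ l')
    (σ : ℝ) (hσ : 0 < σ)
    (v : Fin l → Fin l' → EuclideanSpace ℝ (Fin d))
    (vhat : Fin l → EuclideanSpace ℝ (Fin d))
    (μ : EuclideanSpace ℝ (Fin d))
    (u : Fin l → EuclideanSpace ℝ (Fin d))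
    (hvhat : ∀ i, vhat i = (1 / (l' : ℝ)) • ∑ j, v i j)
    (hμ : μ = (1 / ((l : ℝ) * (l' : ℝ))) • ∑ i, ∑ j, v i j)
    (hu : ∀ i, u i = (1 / σ) • (vhat i - μ))
    (horth : ∀ i j i' j', (i, j) ≠ (i', j') → ⟪v i j, v i' j'⟫_ℝ = 0)
    (c : ℝ) (hc : ∀ i j, ‖v i j‖ = c)
    : ∀ i i', i ≠ i' →
      ⟪u i, u i'⟫_ℝ = -(c ^ 2) / (σ ^ 2 * (l : ℝ) * (l' : ℝ)) ∧
        (0 < c → ⟪u i, u i'⟫_ℝ ≠ 0) := by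
  intro i i' hii'
  have hv (i j i' j') : ⟪v i j, v i' j'⟫_ℝ = if (i, j) = (i', j') then c ^ 2 else 0 :=
    real_inner_eq_ite_of_pairwise_orthogonal (x := fun p : Fin l × Fin l' => v p.1 p.2)
      (fun p q hpq => horth p.1 p.2 q.1 q.2 hpq) (fun p => hc p.1 p.2) (i, j) (i', j')
  have hvhat_inner (k k' : Fin l) : ⟪vhat k, vhat k'⟫_ℝ = if k = k' then c ^ 2 / l' else 0 := by
    simpa [hvhat] using real_inner_blockMean_blockMean hv k k'
  have hμ_mean : μ = (1 / (l : ℝ)) • ∑ k, vhat k := by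
    simp only [hμ, hvhat, ← smul_sum, smul_smul, one_div, mul_inv]
  have hcentered : ⟪vhat i - μ, vhat i' - μ⟫_ℝ = -(c ^ 2 / l') / l := by
    simpa [hμ_mean] using real_inner_sub_mean_sub_mean hvhat_inner hii'
  have hformula : ⟪u i, u i'⟫_ℝ = -(c ^ 2) / (σ ^ 2 * (l : ℝ) * (l' : ℝ)) := by
    rw [hu, hu, real_inner_smul_left, real_inner_smul_right, hcentered]
    ring
  refine ⟨hformula, fun hc_pos => ?_⟩
  have hl_pos : 0 < l := i.pos
  rw [hformula]
  have hden : 0 < σ ^ 2 * (l : ℝ) * (l' : ℝ) := by positivity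
  exact div_ne_zero (neg_ne_zero.mpr (pow_pos hc_pos 2).ne') hden.ne'

theorem stmt_7
    {d l l' : ℕ} (hd : 1 ≤ d) (hl : 1 ≤ l) (hl' : 1 ≤ l')
    (σ : ℝ) (hσ : 0 < σ)
    (v : Fin l → Fin l' → EuclideanSpace ℝ (Fin d))
    (vhat : Fin l → EuclideanSpace ℝ (Fin d))
    (vhat' : Fin l' → EuclideanSpace ℝ (Fin d))
    (μ : EuclideanSpace ℝ (Fin d))
    (u : Fin l → EuclideanSpace ℝ (Fin d))
    (u' : Fin l' → EuclideanSpace ℝ (Fin d))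
    (hvhat : ∀ i, vhat i = (1 / (l' : ℝ)) • ∑ j, v i j)
    (hvhat' : ∀ j, vhat' j = (1 / (l : ℝ)) • ∑ i, v i j)
    (hμ : μ = (1 / ((l : ℝ) * (l' : ℝ))) • ∑ i, ∑ j, v i j)
    (hu : ∀ i, u i = (1 / σ) • (vhat i - μ))
    (hu' : ∀ j, u' j = (1 / σ) • (vhat' j - μ))
    (horth : ∀ i j i' j', (i, j) ≠ (i', j') → ⟪v i j, v i' j'⟫_ℝ = 0)
    (c : ℝ) (hc : ∀ i j, ‖v i j‖ = c)
    : ∀ i i', i ≠ i' →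
      ⟪u i, u i'⟫_ℝ = -(c ^ 2) / (σ ^ 2 * (l : ℝ) * (l' : ℝ)) ∧
        (0 < c → ⟪u i, u i'⟫_ℝ ≠ 0) :=
  stmt_7_general hl' σ hσ v vhat μ u hvhat hμ hu horth c hc
end

section
/- With the attribute setup below, assume l ≥ 2, the family v is pairwise orthogonal, and all vectors v(i,j) have the same norm c > 0. Then for any two distinct indices i ≠ i' in {1,…,l}, the cosine similarity between the centered representations of two base concepts from the same attribute equals S_cos(u_i, u_{i'}) = −1/(l−1). -/
open scoped InnerProductSpace
open Finset

/-- Cosine similarity of vectors in `ℝ^d`. -/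
noncomputable def Scos {d : ℕ} (x y : EuclideanSpace ℝ (Fin d)) : ℝ :=
  ⟪x, y⟫_ℝ / (‖x‖ * ‖y‖)

/-!
The row sums `w i = ∑ j, v i j` form an orthogonal family with common squared norm `r = l' c²`,
and `u i` is a nonzero multiple of `w i - (1/l) ∑ a, w a`. Centering an orthogonal family of
equal norms gives Gram matrix `r (δ_{ii'} - 1/l)`, so the cosine of two distinct centered vectors
is `(-r/l) / (r - r/l) = -1/(l-1)`.
-/
section OrthogonalFamily

variable {E : Type*} [NormedAddCommGroup E] [InnerProductSpace ℝ E] {ι : Type*} [DecidableEq ι]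

theorem inner_sum_sum_eq_ite_of_orthogonal {κ : Type*} [Fintype κ] {v : ι → κ → E} {c : ℝ}
    (horth : ∀ i j i' j', (i, j) ≠ (i', j') → ⟪v i j, v i' j'⟫_ℝ = 0)
    (hc : ∀ i j, ‖v i j‖ = c) (i i' : ι) :
    ⟪∑ j, v i j, ∑ j, v i' j⟫_ℝ = if i = i' then Fintype.card κ * c ^ 2 else 0 := by
  classical
  have hv : ∀ j j', ⟪v i j, v i' j'⟫_ℝ = if i = i' ∧ j = j' then c ^ 2 else 0 := by
    intro j j'
    split_ifs with h
    · obtain ⟨rfl, rfl⟩ := h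
      rw [real_inner_self_eq_norm_sq, hc]
    · exact horth i j i' j' (by simpa using h)
  simp only [sum_inner, inner_sum, hv, ite_and]
  split_ifs <;> simp

variable [Fintype ι] {x : ι → E} {r : ℝ}

theorem inner_sum_right_of_orthogonal (hx : ∀ i j, ⟪x i, x j⟫_ℝ = if i = j then r else 0)
    (i : ι) : ⟪x i, ∑ k, x k⟫_ℝ = r := by
  simp [inner_sum, hx]

theorem inner_sum_self_of_orthogonal (hx : ∀ i j, ⟪x i, x j⟫_ℝ = if i = j then r else 0) :
    ⟪∑ k, x k, ∑ k, x k⟫_ℝ = Fintype.card ι * r := by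
  simp only [sum_inner, inner_sum_right_of_orthogonal hx, sum_const, card_univ, nsmul_eq_mul]

theorem inner_sub_mean_of_orthogonal (hx : ∀ i j, ⟪x i, x j⟫_ℝ = if i = j then r else 0)
    (i j : ι) :
    ⟪x i - (Fintype.card ι : ℝ)⁻¹ • ∑ k, x k, x j - (Fintype.card ι : ℝ)⁻¹ • ∑ k, x k⟫_ℝ =
      (if i = j then r else 0) - r / Fintype.card ι := by
  have : Nonempty ι := ⟨i⟩
  have hn : (Fintype.card ι : ℝ) ≠ 0 := Nat.cast_ne_zero.mpr Fintype.card_ne_zero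
  have hsx : ⟪∑ k, x k, x j⟫_ℝ = r := by
    rw [real_inner_comm, inner_sum_right_of_orthogonal hx]
  simp only [inner_sub_left, inner_sub_right, real_inner_smul_left, real_inner_smul_right,
    hx, inner_sum_right_of_orthogonal hx, hsx, inner_sum_self_of_orthogonal hx]
  field_simp
  ring

theorem cos_sub_mean_of_orthogonal (hx : ∀ i j, ⟪x i, x j⟫_ℝ = if i = j then r else 0)
    (hr : r ≠ 0) {i j : ι} (hij : i ≠ j) :
    ⟪x i - (Fintype.card ι : ℝ)⁻¹ • ∑ k, x k, x j - (Fintype.card ι : ℝ)⁻¹ • ∑ k, x k⟫_ℝ /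
      (‖x i - (Fintype.card ι : ℝ)⁻¹ • ∑ k, x k‖ * ‖x j - (Fintype.card ι : ℝ)⁻¹ • ∑ k, x k‖)
      = -1 / ((Fintype.card ι : ℝ) - 1) := by
  have hn : (1 : ℝ) < Fintype.card ι := by
    exact_mod_cast Fintype.one_lt_card_iff.mpr ⟨i, j, hij⟩
  have hnorm : ∀ k, ‖x k - (Fintype.card ι : ℝ)⁻¹ • ∑ k, x k‖ ^ 2 = r - r / Fintype.card ι := by
    intro k
    rw [← real_inner_self_eq_norm_sq, inner_sub_mean_of_orthogonal hx, if_pos rfl]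
  have hprod : ‖x i - (Fintype.card ι : ℝ)⁻¹ • ∑ k, x k‖ * ‖x j - (Fintype.card ι : ℝ)⁻¹ • ∑ k, x k‖
      = r - r / Fintype.card ι := by
    rw [(sq_eq_sq₀ (norm_nonneg _) (norm_nonneg _)).mp ((hnorm i).trans (hnorm j).symm), ← sq,
      hnorm]
  rw [inner_sub_mean_of_orthogonal hx, if_neg hij, hprod]
  field_simp
  ring

end OrthogonalFamily

theorem Scos_smul_smul {d : ℕ} {a : ℝ} (ha : a ≠ 0) (x y : EuclideanSpace ℝ (Fin d)) :
    Scos (a • x) (a • y) = Scos x y := by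
  unfold Scos
  rw [real_inner_smul_left, real_inner_smul_right, norm_smul, norm_smul, Real.norm_eq_abs,
    mul_mul_mul_comm, abs_mul_abs_self, mul_assoc, mul_div_mul_left _ _ ha,
    mul_div_mul_left _ _ ha]

theorem stmt_8_general
    {d l l' : ℕ} (hl' : 1 ≤ l')
    (σ : ℝ) (hσ : 0 < σ)
    (v : Fin l → Fin l' → EuclideanSpace ℝ (Fin d))
    (vhat : Fin l → EuclideanSpace ℝ (Fin d))
    (μ : EuclideanSpace ℝ (Fin d))
    (u : Fin l → EuclideanSpace ℝ (Fin d))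
    (hvhat : ∀ i, vhat i = (1 / (l' : ℝ)) • ∑ j, v i j)
    (hμ : μ = (1 / ((l : ℝ) * (l' : ℝ))) • ∑ i, ∑ j, v i j)
    (hu : ∀ i, u i = (1 / σ) • (vhat i - μ))
    (horth : ∀ i j i' j', (i, j) ≠ (i', j') → ⟪v i j, v i' j'⟫_ℝ = 0)
    (c : ℝ) (hcpos : 0 < c) (hc : ∀ i j, ‖v i j‖ = c)
    : ∀ i i', i ≠ i' → Scos (u i) (u i') = -1 / ((l : ℝ) - 1) := by
  intro i i' hii'
  have hcenter : ∀ i, u i = (σ * l')⁻¹ •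
      (∑ j, v i j - (Fintype.card (Fin l) : ℝ)⁻¹ • ∑ a, ∑ j, v a j) := by
    intro i
    rw [hu, hvhat, hμ, Fintype.card_fin]
    module
  have hr : (Fintype.card (Fin l') : ℝ) * c ^ 2 ≠ 0 := by
    rw [Fintype.card_fin]
    positivity
  rw [hcenter, hcenter, Scos_smul_smul (by positivity), Scos,
    cos_sub_mean_of_orthogonal (inner_sum_sum_eq_ite_of_orthogonal horth hc) hr hii',
    Fintype.card_fin]

theorem stmt_8
    {d l l' : ℕ} (hd : 1 ≤ d) (hl : 1 ≤ l) (hl' : 1 ≤ l')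
    (σ : ℝ) (hσ : 0 < σ)
    (v : Fin l → Fin l' → EuclideanSpace ℝ (Fin d))
    (vhat : Fin l → EuclideanSpace ℝ (Fin d))
    (vhat' : Fin l' → EuclideanSpace ℝ (Fin d))
    (μ : EuclideanSpace ℝ (Fin d))
    (u : Fin l → EuclideanSpace ℝ (Fin d))
    (u' : Fin l' → EuclideanSpace ℝ (Fin d))
    (hvhat : ∀ i, vhat i = (1 / (l' : ℝ)) • ∑ j, v i j)
    (hvhat' : ∀ j, vhat' j = (1 / (l : ℝ)) • ∑ i, v i j)
    (hμ : μ = (1 / ((l : ℝ) * (l' : ℝ))) • ∑ i, ∑ j, v i j)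
    (hu : ∀ i, u i = (1 / σ) • (vhat i - μ))
    (hu' : ∀ j, u' j = (1 / σ) • (vhat' j - μ))
    (hl2 : 2 ≤ l)
    (horth : ∀ i j i' j', (i, j) ≠ (i', j') → ⟪v i j, v i' j'⟫_ℝ = 0)
    (c : ℝ) (hcpos : 0 < c) (hc : ∀ i j, ‖v i j‖ = c)
    : ∀ i i', i ≠ i' → Scos (u i) (u i') = -1 / ((l : ℝ) - 1) :=
  stmt_8_general hl' σ hσ v vhat μ u hvhat hμ hu horth c hcpos hc
end

section
/- With the attribute setup below, assume the family v is pairwise orthogonal. Then for all i, j, the uncentered base-concept representations from the two attributes satisfy ⟨v̂_i, v̂'_j⟩ = ‖v(i,j)‖²/(l·l'); in particular, before centering, base-concept representations from different attributes are non-orthogonal whenever v(i,j) ≠ 0. -/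
open scoped InnerProductSpace
open Finset

theorem stmt_11
    {d l l' : ℕ} (hd : 1 ≤ d) (hl : 1 ≤ l) (hl' : 1 ≤ l')
    (σ : ℝ) (hσ : 0 < σ)
    (v : Fin l → Fin l' → EuclideanSpace ℝ (Fin d))
    (vhat : Fin l → EuclideanSpace ℝ (Fin d))
    (vhat' : Fin l' → EuclideanSpace ℝ (Fin d))
    (μ : EuclideanSpace ℝ (Fin d))
    (u : Fin l → EuclideanSpace ℝ (Fin d))
    (u' : Fin l' → EuclideanSpace ℝ (Fin d))
    (hvhat : ∀ i, vhat i = (1 / (l' : ℝ)) • ∑ j, v i j)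
    (hvhat' : ∀ j, vhat' j = (1 / (l : ℝ)) • ∑ i, v i j)
    (hμ : μ = (1 / ((l : ℝ) * (l' : ℝ))) • ∑ i, ∑ j, v i j)
    (hu : ∀ i, u i = (1 / σ) • (vhat i - μ))
    (hu' : ∀ j, u' j = (1 / σ) • (vhat' j - μ))
    (horth : ∀ i j i' j', (i, j) ≠ (i', j') → ⟪v i j, v i' j'⟫_ℝ = 0)
    : ∀ i j, ⟪vhat i, vhat' j⟫_ℝ = ‖v i j‖ ^ 2 / ((l : ℝ) * (l' : ℝ)) ∧
      (v i j ≠ 0 → ⟪vhat i, vhat' j⟫_ℝ ≠ 0) := by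
  intro i j
  have hl0 : (l : ℝ) ≠ 0 := by positivity
  have hl'0 : (l' : ℝ) ≠ 0 := by positivity
  have key : ⟪vhat i, vhat' j⟫_ℝ = ‖v i j‖ ^ 2 / ((l : ℝ) * (l' : ℝ)) := by
    rw [hvhat, hvhat', real_inner_smul_left, real_inner_smul_right, sum_inner]
    have : ∀ j' ∈ (univ : Finset (Fin l')), ⟪v i j', ∑ i', v i' j⟫_ℝ =
        if j' = j then ‖v i j‖ ^ 2 else 0 := by
      intro j' _
      rw [inner_sum]
      by_cases h : j' = j
      · subst h
        rw [if_pos rfl, Finset.sum_eq_single i]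
        · rw [real_inner_self_eq_norm_sq]
        · intro i' _ hi'
          exact horth i j' i' j' (by simp [hi'.symm])
        · simp
      · rw [if_neg h]
        apply Finset.sum_eq_zero
        intro i' _
        exact horth i j' i' j (by simp [h])
    rw [Finset.sum_congr rfl this, Finset.sum_ite_eq' univ j, if_pos (mem_univ j)]
    rw [eq_div_iff (mul_ne_zero hl0 hl'0)]
    ring_nf
    rw [mul_inv_cancel₀ hl'0, one_mul, mul_inv_cancel₀ hl0, one_mul]
  refine ⟨key, fun hv => ?_⟩
  rw [key]
  have h1 : (0:ℝ) < ‖v i j‖ ^ 2 := pow_pos (norm_pos_iff.mpr hv) 2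
  have h2 : (0:ℝ) < (l : ℝ) * (l' : ℝ) := by positivity
  exact ne_of_gt (div_pos h1 h2)
end

section
/- With the attribute setup below, assume l ≥ 2, the family v is pairwise orthogonal, and all vectors v(i,j) have the same norm c > 0. Then for any i, j and any t ≠ i, the cosine similarity between a composite-concept representation and the centered representation of a base concept it does not contain equals S_cos(v(i,j), u_t) = −1/√(l·l'·(l−1)). -/
/-!
Rescaling by `c` makes the family `v` orthonormal, and cosine similarity is invariant under
positive rescaling of either argument. Up to such a factor, `u_t` is `m_S - m_T`, where `m_X` is
the average of the orthonormal vectors indexed by `X`, `S` is the row of `t` and `T` is the whole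
index set. For an orthonormal family `⟪m_S, m_T⟫ = #(S ∩ T) / (#S * #T)`, so for `S ⊆ T` we get
`‖m_S - m_T‖² = 1/#S - 1/#T`, while `⟪e_k, m_S - m_T⟫ = -1/#T` for `k ∈ T \ S`. The cosine is
therefore `-1 / √(#T * (#T - #S) / #S)`, and `#S = l'`, `#T = l * l'`.
-/

open scoped InnerProductSpace
open Finset

open InnerProductGeometry

section

variable {ι E : Type*} [NormedAddCommGroup E] [InnerProductSpace ℝ E]

namespace Orthonormal

variable {e : ι → E} (he : Orthonormal ℝ e)
include he

theorem inner_sum_sum [DecidableEq ι] (s t : Finset ι) :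
    ⟪∑ p ∈ s, e p, ∑ q ∈ t, e q⟫_ℝ = #(s ∩ t) := by
  simp [sum_inner, inner_sum, orthonormal_iff_ite.1 he, Finset.sum_ite_mem, inter_comm]

theorem inner_apply_sub_mean {s t : Finset ι} {k : ι} (hkt : k ∈ t) (hks : k ∉ s) :
    ⟪e k, (#s : ℝ)⁻¹ • ∑ p ∈ s, e p - (#t : ℝ)⁻¹ • ∑ p ∈ t, e p⟫_ℝ = -(#t : ℝ)⁻¹ := by
  classical
  rw [inner_sub_right, real_inner_smul_right, real_inner_smul_right, ← sum_singleton e k,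
    he.inner_sum_sum, he.inner_sum_sum, singleton_inter_of_notMem hks, singleton_inter_of_mem hkt]
  simp

variable {s t : Finset ι} (hst : s ⊆ t)
include hst

theorem norm_sub_mean_sq (hs : s.Nonempty) :
    ‖(#s : ℝ)⁻¹ • ∑ p ∈ s, e p - (#t : ℝ)⁻¹ • ∑ p ∈ t, e p‖ ^ 2 = (#s : ℝ)⁻¹ - (#t : ℝ)⁻¹ := by
  classical
  have hs₀ : (#s : ℝ) ≠ 0 := by exact_mod_cast hs.card_ne_zero
  have ht₀ : (#t : ℝ) ≠ 0 := by exact_mod_cast (hs.mono hst).card_ne_zero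
  rw [← real_inner_self_eq_norm_sq]
  simp only [inner_sub_left, inner_sub_right, real_inner_smul_left, real_inner_smul_right,
    he.inner_sum_sum, inter_self, inter_eq_left.2 hst, inter_eq_right.2 hst]
  field_simp
  ring

theorem cos_angle_apply_sub_mean (hs : s.Nonempty) {k : ι} (hkt : k ∈ t) (hks : k ∉ s) :
    Real.cos (angle (e k) ((#s : ℝ)⁻¹ • ∑ p ∈ s, e p - (#t : ℝ)⁻¹ • ∑ p ∈ t, e p)) =
      -1 / √(#t * (#t - #s) / #s) := by
  have hs₀ : (0 : ℝ) < #s := by exact_mod_cast hs.card_pos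
  have hcard : (#s : ℝ) < #t := by
    exact_mod_cast card_lt_card (ssubset_of_subset_of_ne hst (by rintro rfl; exact hks hkt))
  have ht₀ : (0 : ℝ) < #t := hs₀.trans hcard
  have hrad : (#t : ℝ) * (#t - #s) / #s = #t ^ 2 * ((#s : ℝ)⁻¹ - (#t : ℝ)⁻¹) := by
    field_simp
  rw [cos_angle, he.inner_apply_sub_mean hkt hks, he.norm_eq_one, one_mul, hrad,
    Real.sqrt_mul (by positivity), Real.sqrt_sq ht₀.le, ← he.norm_sub_mean_sq hst hs,
    Real.sqrt_sq (norm_nonneg _)]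
  field_simp

end Orthonormal

theorem orthonormal_inv_smul_of_norm_eq {v : ι → E} {c : ℝ} (hc : 0 < c) (hnorm : ∀ i, ‖v i‖ = c)
    (horth : Pairwise fun i j => ⟪v i, v j⟫_ℝ = 0) : Orthonormal ℝ fun i => c⁻¹ • v i := by
  refine ⟨fun i => ?_, fun i j hij => ?_⟩
  · rw [norm_smul, hnorm, Real.norm_of_nonneg (inv_nonneg.2 hc.le), inv_mul_cancel₀ hc.ne']
  · simp only [real_inner_smul_left, real_inner_smul_right, horth hij, mul_zero]

theorem Orthonormal.cos_angle_apply_sub_row_mean {κ : Type*} [Fintype ι] [Fintype κ]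
    {e : ι × κ → E} (he : Orthonormal ℝ e) {i t : ι} (hti : t ≠ i) (j : κ) :
    Real.cos (angle (e (i, j)) ((Fintype.card κ : ℝ)⁻¹ • ∑ b, e (t, b) -
        ((Fintype.card ι : ℝ) * Fintype.card κ)⁻¹ • ∑ a, ∑ b, e (a, b))) =
      -1 / √(Fintype.card ι * Fintype.card κ * (Fintype.card ι - 1)) := by
  have hrow : ∑ b, e (t, b) = ∑ p ∈ {t} ×ˢ univ, e p := by rw [sum_product, sum_singleton]
  have hall : ∑ a, ∑ b, e (a, b) = ∑ p, e p := by rw [← univ_product_univ, sum_product]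
  have hrow_card : (#({t} ×ˢ (univ : Finset κ)) : ℝ) = Fintype.card κ := by simp
  have hall_card : (#(univ : Finset (ι × κ)) : ℝ) = Fintype.card ι * Fintype.card κ := by simp
  have hκ : (0 : ℝ) < Fintype.card κ := by exact_mod_cast Fintype.card_pos_iff.2 ⟨j⟩
  have hcos := he.cos_angle_apply_sub_mean (subset_univ ({t} ×ˢ univ)) ⟨(t, j), by simp⟩
    (mem_univ (i, j)) (by simpa using hti)
  rw [hrow_card, hall_card] at hcos
  rw [hrow, hall, hcos]
  congr 2
  field_simp

end

theorem stmt_12_general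
    {d l l' : ℕ}
    (σ : ℝ) (hσ : 0 < σ)
    (v : Fin l → Fin l' → EuclideanSpace ℝ (Fin d))
    (vhat : Fin l → EuclideanSpace ℝ (Fin d))
    (μ : EuclideanSpace ℝ (Fin d))
    (u : Fin l → EuclideanSpace ℝ (Fin d))
    (hvhat : ∀ i, vhat i = (1 / (l' : ℝ)) • ∑ j, v i j)
    (hμ : μ = (1 / ((l : ℝ) * (l' : ℝ))) • ∑ i, ∑ j, v i j)
    (hu : ∀ i, u i = (1 / σ) • (vhat i - μ))
    (horth : ∀ i j i' j', (i, j) ≠ (i', j') → ⟪v i j, v i' j'⟫_ℝ = 0)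
    (c : ℝ) (hcpos : 0 < c) (hc : ∀ i j, ‖v i j‖ = c)
    : ∀ i j t, t ≠ i →
      Scos (v i j) (u t) = -1 / Real.sqrt ((l : ℝ) * (l' : ℝ) * ((l : ℝ) - 1)) := by
  intro i j t hti
  obtain ⟨e, he, hv⟩ : ∃ e : Fin l × Fin l' → EuclideanSpace ℝ (Fin d),
      Orthonormal ℝ e ∧ ∀ a b, v a b = c • e (a, b) :=
    ⟨_, orthonormal_inv_smul_of_norm_eq hcpos (fun p => hc p.1 p.2)
      (fun p q => horth p.1 p.2 q.1 q.2), fun a b => by simp [smul_smul, hcpos.ne']⟩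
  have hut : u t = (σ⁻¹ * c) • ((l' : ℝ)⁻¹ • ∑ b, e (t, b) -
      ((l : ℝ) * l')⁻¹ • ∑ a, ∑ b, e (a, b)) := by
    simp only [hu, hvhat, hμ, hv, ← smul_sum]
    module
  have hcos := he.cos_angle_apply_sub_row_mean hti j
  simp only [Fintype.card_fin] at hcos
  rw [Scos, ← cos_angle, hut, hv, angle_smul_left_of_pos _ _ hcpos,
    angle_smul_right_of_pos _ _ (by positivity), hcos]

theorem stmt_12
    {d l l' : ℕ} (hd : 1 ≤ d) (hl : 1 ≤ l) (hl' : 1 ≤ l')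
    (σ : ℝ) (hσ : 0 < σ)
    (v : Fin l → Fin l' → EuclideanSpace ℝ (Fin d))
    (vhat : Fin l → EuclideanSpace ℝ (Fin d))
    (vhat' : Fin l' → EuclideanSpace ℝ (Fin d))
    (μ : EuclideanSpace ℝ (Fin d))
    (u : Fin l → EuclideanSpace ℝ (Fin d))
    (u' : Fin l' → EuclideanSpace ℝ (Fin d))
    (hvhat : ∀ i, vhat i = (1 / (l' : ℝ)) • ∑ j, v i j)
    (hvhat' : ∀ j, vhat' j = (1 / (l : ℝ)) • ∑ i, v i j)
    (hμ : μ = (1 / ((l : ℝ) * (l' : ℝ))) • ∑ i, ∑ j, v i j)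
    (hu : ∀ i, u i = (1 / σ) • (vhat i - μ))
    (hu' : ∀ j, u' j = (1 / σ) • (vhat' j - μ))
    (hl2 : 2 ≤ l)
    (horth : ∀ i j i' j', (i, j) ≠ (i', j') → ⟪v i j, v i' j'⟫_ℝ = 0)
    (c : ℝ) (hcpos : 0 < c) (hc : ∀ i j, ‖v i j‖ = c)
    : ∀ i j t, t ≠ i →
      Scos (v i j) (u t) = -1 / Real.sqrt ((l : ℝ) * (l' : ℝ) * ((l : ℝ) - 1)) :=
  stmt_12_general σ hσ v vhat μ u hvhat hμ hu horth c hcpos hc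
end

section
/- With the attribute setup below, assume l ≥ 2, the family v is pairwise orthogonal, and all vectors v(i,j) have the same norm c > 0. Then for any i, j, the cosine similarity between a composite-concept representation and the centered representation of a base concept it contains equals S_cos(v(i,j), u_i) = √((l−1)/(l·l')). In particular ⟨v(i,j), u_i⟩ = c²·(l−1)/(σ·l·l') > 0. -/
open scoped InnerProductSpace
open Finset

theorem stmt_13
    {d l l' : ℕ} (hd : 1 ≤ d) (hl : 1 ≤ l) (hl' : 1 ≤ l')
    (σ : ℝ) (hσ : 0 < σ)
    (v : Fin l → Fin l' → EuclideanSpace ℝ (Fin d))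
    (vhat : Fin l → EuclideanSpace ℝ (Fin d))
    (vhat' : Fin l' → EuclideanSpace ℝ (Fin d))
    (μ : EuclideanSpace ℝ (Fin d))
    (u : Fin l → EuclideanSpace ℝ (Fin d))
    (u' : Fin l' → EuclideanSpace ℝ (Fin d))
    (hvhat : ∀ i, vhat i = (1 / (l' : ℝ)) • ∑ j, v i j)
    (hvhat' : ∀ j, vhat' j = (1 / (l : ℝ)) • ∑ i, v i j)
    (hμ : μ = (1 / ((l : ℝ) * (l' : ℝ))) • ∑ i, ∑ j, v i j)
    (hu : ∀ i, u i = (1 / σ) • (vhat i - μ))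
    (hu' : ∀ j, u' j = (1 / σ) • (vhat' j - μ))
    (hl2 : 2 ≤ l)
    (horth : ∀ i j i' j', (i, j) ≠ (i', j') → ⟪v i j, v i' j'⟫_ℝ = 0)
    (c : ℝ) (hcpos : 0 < c) (hc : ∀ i j, ‖v i j‖ = c)
    : ∀ i j, Scos (v i j) (u i) = Real.sqrt (((l : ℝ) - 1) / ((l : ℝ) * (l' : ℝ))) ∧
      ⟪v i j, u i⟫_ℝ = c ^ 2 * ((l : ℝ) - 1) / (σ * (l : ℝ) * (l' : ℝ)) ∧
      0 < ⟪v i j, u i⟫_ℝ := by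
  intro i j
  have hl0 : ((l : ℝ)) ≠ 0 := by positivity
  have hl'0 : ((l' : ℝ)) ≠ 0 := by positivity
  have hσ0 : σ ≠ 0 := ne_of_gt hσ
  have hc0 : c ≠ 0 := ne_of_gt hcpos
  have hl1 : (1 : ℝ) < (l : ℝ) := by exact_mod_cast hl2
  have hvv : ∀ a b a' b', ⟪v a b, v a' b'⟫_ℝ = if a = a' ∧ b = b' then c ^ 2 else 0 := by
    intro a b a' b'
    by_cases h : a = a' ∧ b = b'
    · obtain ⟨rfl, rfl⟩ := h
      rw [if_pos ⟨rfl, rfl⟩, real_inner_self_eq_norm_sq, hc]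
    · rw [if_neg h]
      apply horth
      simp only [ne_eq, Prod.mk.injEq]
      tauto
  -- sums of inner products
  have hsum1 : ∀ a b, ⟪v a b, ∑ b', v a b'⟫_ℝ = c ^ 2 := by
    intro a b
    rw [inner_sum]
    simp [hvv]
  have hsum2 : ∀ a b, ⟪v a b, ∑ a', ∑ b', v a' b'⟫_ℝ = c ^ 2 := by
    intro a b
    rw [inner_sum, Finset.sum_eq_single a (fun a' _ hne => by
      rw [inner_sum]
      exact Finset.sum_eq_zero fun b' _ => by simp [hvv, (Ne.symm hne)])
      (by simp)]
    exact hsum1 a b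
  have h1 : ⟪v i j, vhat i⟫_ℝ = c ^ 2 / (l' : ℝ) := by
    rw [hvhat, inner_smul_right, hsum1]; ring
  have h2 : ⟪v i j, μ⟫_ℝ = c ^ 2 / ((l : ℝ) * (l' : ℝ)) := by
    rw [hμ, inner_smul_right, hsum2]; ring
  have hinner : ⟪v i j, u i⟫_ℝ = c ^ 2 * ((l : ℝ) - 1) / (σ * (l : ℝ) * (l' : ℝ)) := by
    rw [hu, inner_smul_right, inner_sub_right, h1, h2]
    field_simp
  -- norms
  have hvvh : ⟪vhat i, vhat i⟫_ℝ = c ^ 2 / (l' : ℝ) := by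
    rw [hvhat, inner_smul_left, inner_smul_right, sum_inner]
    simp only [hsum1, Finset.sum_const, Finset.card_univ, Fintype.card_fin,
      nsmul_eq_mul, RCLike.star_def, starRingEnd_apply, star_trivial]
    field_simp
  have hvm : ⟪vhat i, μ⟫_ℝ = c ^ 2 / ((l : ℝ) * (l' : ℝ)) := by
    rw [hvhat, hμ, inner_smul_left, inner_smul_right, sum_inner]
    simp only [hsum2, Finset.sum_const, Finset.card_univ, Fintype.card_fin,
      nsmul_eq_mul, RCLike.star_def, starRingEnd_apply, star_trivial]
    field_simp
  have hmv : ⟪μ, vhat i⟫_ℝ = c ^ 2 / ((l : ℝ) * (l' : ℝ)) := by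
    rw [real_inner_comm]; exact hvm
  have hmm : ⟪μ, μ⟫_ℝ = c ^ 2 / ((l : ℝ) * (l' : ℝ)) := by
    rw [hμ, inner_smul_left, inner_smul_right, sum_inner]
    simp only [sum_inner, hsum2, Finset.sum_const, Finset.card_univ, Fintype.card_fin,
      nsmul_eq_mul, RCLike.star_def, starRingEnd_apply, star_trivial]
    field_simp
  have hnormsq : ‖u i‖ ^ 2 = c ^ 2 * ((l : ℝ) - 1) / (σ ^ 2 * ((l : ℝ) * (l' : ℝ))) := by
    rw [← real_inner_self_eq_norm_sq, hu, inner_smul_left, inner_smul_right,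
      inner_sub_left, inner_sub_right, inner_sub_right, hvvh, hvm, hmv, hmm]
    simp only [RCLike.star_def, starRingEnd_apply, star_trivial]
    field_simp
    ring
  have hKpos : 0 < ((l : ℝ) - 1) / ((l : ℝ) * (l' : ℝ)) := by
    apply div_pos (by linarith)
    positivity
  have hunorm : ‖u i‖ = (c / σ) * Real.sqrt (((l : ℝ) - 1) / ((l : ℝ) * (l' : ℝ))) := by
    rw [← Real.sqrt_sq (norm_nonneg (u i)), hnormsq]
    rw [show c ^ 2 * ((l : ℝ) - 1) / (σ ^ 2 * ((l : ℝ) * (l' : ℝ)))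
        = (c / σ) ^ 2 * (((l : ℝ) - 1) / ((l : ℝ) * (l' : ℝ))) by field_simp]
    rw [Real.sqrt_mul (sq_nonneg _), Real.sqrt_sq (le_of_lt (div_pos hcpos hσ))]
  refine ⟨?_, hinner, ?_⟩
  · unfold Scos
    rw [hinner, hc, hunorm]
    rw [div_eq_iff (by positivity)]
    have hs : Real.sqrt (((l : ℝ) - 1) / ((l : ℝ) * (l' : ℝ))) *
        Real.sqrt (((l : ℝ) - 1) / ((l : ℝ) * (l' : ℝ)))
        = ((l : ℝ) - 1) / ((l : ℝ) * (l' : ℝ)) :=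
      Real.mul_self_sqrt (le_of_lt hKpos)
    have hrw : Real.sqrt (((l : ℝ) - 1) / ((l : ℝ) * (l' : ℝ))) *
        (c * (c / σ * Real.sqrt (((l : ℝ) - 1) / ((l : ℝ) * (l' : ℝ)))))
        = (Real.sqrt (((l : ℝ) - 1) / ((l : ℝ) * (l' : ℝ))) *
          Real.sqrt (((l : ℝ) - 1) / ((l : ℝ) * (l' : ℝ)))) * (c * c / σ) := by ring
    rw [hrw, hs]
    field_simp
  · rw [hinner]
    apply div_pos (mul_pos (pow_pos hcpos 2) (by linarith)) (by positivity)
end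

section
/- Let v, w ∈ ℝ^d be unit vectors with ⟨v, w⟩ = 0, and let x, x' ∈ ℝ^d be nonzero vectors. If S_cos(x, v) > S_cos(x', v) and S_cos(x, w) > S_cos(x', w), then S_cos(x, v + w) > S_cos(x', v + w). (Hence if orthonormal concept representations v and w each perfectly rank samples containing their respective concepts above samples not containing them, then v + w is a concept representation that ranks samples containing both concepts above samples containing neither; i.e., orthogonal perfectly-ranking concept representations are compositional.) -/
open scoped InnerProductSpace

/-- If orthonormal concept representations `v` and `w` each rank `x` strictly
above `x'`, then so does the composed representation `v + w`: orthogonal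
perfectly-ranking concept representations are compositional. -/
theorem stmt_15 {d : ℕ} (v w x x' : EuclideanSpace ℝ (Fin d))
    (hv : ‖v‖ = 1) (hw : ‖w‖ = 1) (hvw : ⟪v, w⟫_ℝ = 0)
    (hx : x ≠ 0) (hx' : x' ≠ 0)
    (h₁ : Scos x v > Scos x' v) (h₂ : Scos x w > Scos x' w) :
    Scos x (v + w) > Scos x' (v + w) := by
  have hvw0 : v + w ≠ 0 := by
    intro h
    have h0 : ⟪v, v + w⟫_ℝ = 0 := by rw [h, inner_zero_right]
    rw [inner_add_right, hvw, real_inner_self_eq_norm_sq, hv] at h0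
    norm_num at h0
  have hn : (0:ℝ) < ‖v + w‖ := norm_pos_iff.mpr hvw0
  have key : ∀ y : EuclideanSpace ℝ (Fin d), y ≠ 0 →
      Scos y (v + w) = (Scos y v + Scos y w) * (1 / ‖v + w‖) := by
    intro y hy
    have hyn : (0:ℝ) < ‖y‖ := norm_pos_iff.mpr hy
    unfold Scos
    rw [inner_add_right, hv, hw]
    field_simp
  rw [key x hx, key x' hx']
  exact mul_lt_mul_of_pos_right (add_lt_add h₁ h₂) (by positivity)
end

section
/- Let x and y be independent standard Gaussian random vectors in ℝ^d with d ≥ 1, and let ε > 0. Then the probability that their cosine similarity is at most ε in absolute value satisfies P[ |⟨x/‖x‖, y/‖y‖⟩| ≤ ε ] ≥ 1 − 2/(√d·ε) − 7/√d. (In particular, two independent standard Gaussian vectors in high dimension are nearly orthogonal with high probability.) -/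
/-!
Write `n` for the dimension. Off the three events `ε n / 2 ≤ |⟨x, y⟩|`, `n / 2 ≤ |‖x‖² - n|` and
`n / 2 ≤ |‖y‖² - n|`, the cosine similarity is at most `ε` in absolute value. Each of these sums
has i.i.d. summands, so Chebyshev's inequality bounds the probabilities by `4 / (n ε²)`,
`8 / n` and `8 / n`, using `Var[x₁ y₁] = 1` and `Var[x₁²] = E[x₁⁴] - 1 = 2`; the fourth moment
comes from the fourth derivative of the moment generating function `exp (t² / 2)`. The claimed
bound is vacuous unless `√n ε > 2` and `√n > 7`, and then `4 / (n ε²) ≤ 2 / (√n ε)` and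
`16 / n ≤ 7 / √n`.
-/

open MeasureTheory ProbabilityTheory
open scoped NNReal

section GaussianMoments

lemma deriv_mul_exp_mul_sq_div_two {p p' q : ℝ → ℝ} (v : ℝ) (hp : ∀ t, HasDerivAt p (p' t) t)
    (hq : ∀ t, p' t + v * t * p t = q t) :
    deriv (fun t ↦ p t * Real.exp (v * t ^ 2 / 2)) = fun t ↦ q t * Real.exp (v * t ^ 2 / 2) := by
  funext t
  have he : HasDerivAt (fun t ↦ v * t ^ 2 / 2) (v * t) t :=
    (((hasDerivAt_pow 2 t).const_mul v).div_const 2).congr_deriv (by ring)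
  rw [((hp t).fun_mul he.exp).deriv, ← hq]
  ring

lemma integral_pow_four_gaussianReal (v : ℝ≥0) : ∫ x, x ^ 4 ∂gaussianReal 0 v = 3 * v ^ 2 := by
  have d₁ := deriv_mul_exp_mul_sq_div_two v (q := fun t ↦ v * t)
    (fun t ↦ hasDerivAt_const t (1 : ℝ)) (fun t ↦ by ring)
  have d₂ := deriv_mul_exp_mul_sq_div_two v (q := fun t ↦ v + v ^ 2 * t ^ 2)
    (fun t ↦ (hasDerivAt_id' t).const_mul (v : ℝ)) (fun t ↦ by ring)
  have d₃ := deriv_mul_exp_mul_sq_div_two v (q := fun t ↦ 3 * v ^ 2 * t + v ^ 3 * t ^ 3)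
    (fun t ↦ ((hasDerivAt_pow 2 t).const_mul ((v : ℝ) ^ 2)).const_add (v : ℝ)) (fun t ↦ by ring)
  have d₄ := deriv_mul_exp_mul_sq_div_two v
    (q := fun t ↦ 3 * v ^ 2 + 6 * v ^ 3 * t ^ 2 + v ^ 4 * t ^ 4)
    (fun t ↦ ((hasDerivAt_id' t).const_mul (3 * (v : ℝ) ^ 2)).fun_add
      ((hasDerivAt_pow 3 t).const_mul ((v : ℝ) ^ 3))) (fun t ↦ by ring)
  have hmgf : mgf id (gaussianReal 0 v) = fun t ↦ 1 * Real.exp (v * t ^ 2 / 2) := by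
    simp [mgf_id_gaussianReal]
  calc ∫ x, x ^ 4 ∂gaussianReal 0 v = iteratedDeriv 4 (mgf id (gaussianReal 0 v)) 0 := by
        rw [iteratedDeriv_mgf_zero (by simp)]; rfl
    _ = 3 * v ^ 2 := by
        rw [hmgf, iteratedDeriv_succ, iteratedDeriv_succ, iteratedDeriv_succ, iteratedDeriv_one,
          d₁, d₂, d₃, d₄]
        simp

lemma integrable_pow_gaussianReal (μ : ℝ) (v : ℝ≥0) (n : ℕ) :
    Integrable (fun x ↦ x ^ n) (gaussianReal μ v) :=
  integrable_pow_of_mem_interior_integrableExpSet (X := id) (by simp) n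

lemma integral_sq_gaussianReal (v : ℝ≥0) : ∫ x, x ^ 2 ∂gaussianReal 0 v = v := by
  rw [← variance_of_integral_eq_zero (X := fun x ↦ x) aemeasurable_id (by simp),
    variance_fun_id_gaussianReal]

lemma memLp_two_sq_gaussianReal (μ : ℝ) (v : ℝ≥0) :
    MemLp (fun x ↦ x ^ 2) 2 (gaussianReal μ v) :=
  (memLp_two_iff_integrable_sq (by fun_prop)).2 <| by
    simpa [← pow_mul] using integrable_pow_gaussianReal μ v 4

lemma variance_sq_gaussianReal (v : ℝ≥0) :
    Var[fun x ↦ x ^ 2; gaussianReal 0 v] = 2 * v ^ 2 := by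
  rw [variance_eq_sub (memLp_two_sq_gaussianReal 0 v)]
  simp only [Pi.pow_apply, ← pow_mul, integral_pow_four_gaussianReal, integral_sq_gaussianReal]
  ring

lemma memLp_two_mul_gaussianReal (v w : ℝ≥0) :
    MemLp (fun p : ℝ × ℝ ↦ p.1 * p.2) 2 ((gaussianReal 0 v).prod (gaussianReal 0 w)) :=
  (memLp_two_iff_integrable_sq (by fun_prop)).2 <| by
    simpa [mul_pow] using
      (integrable_pow_gaussianReal 0 v 2).mul_prod (integrable_pow_gaussianReal 0 w 2)

lemma variance_mul_gaussianReal (v w : ℝ≥0) :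
    Var[fun p : ℝ × ℝ ↦ p.1 * p.2; (gaussianReal 0 v).prod (gaussianReal 0 w)] = v * w := by
  rw [variance_eq_sub (memLp_two_mul_gaussianReal v w)]
  simp only [Pi.pow_apply, mul_pow, integral_prod_mul (f := fun x ↦ x ^ 2) (g := fun x ↦ x ^ 2),
    integral_prod_mul (f := fun x ↦ x) (g := fun x ↦ x), integral_sq_gaussianReal]
  simp

end GaussianMoments

section Concentration

variable {ι : Type*} [Fintype ι]

lemma measureReal_pi_abs_sum_sub_ge_le {α : Type*} [MeasurableSpace α] {m : Measure α}
    [IsProbabilityMeasure m] {f : α → ℝ} (hf : MemLp f 2 m) {c : ℝ} (hc : 0 < c) :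
    (Measure.pi fun _ : ι ↦ m).real {z | c ≤ |∑ i, f (z i) - Fintype.card ι * ∫ a, f a ∂m|}
      ≤ Fintype.card ι * Var[f; m] / c ^ 2 := by
  set P := Measure.pi fun _ : ι ↦ m
  have hpres (i : ι) : MeasurePreserving (Function.eval i) P m := measurePreserving_eval _ i
  have hmem (i : ι) : MemLp (fun z : ι → α ↦ f (z i)) 2 P := hf.comp_measurePreserving (hpres i)
  have hindep : iIndepFun (fun i z ↦ f (z i)) P :=
    iIndepFun_pi (fun _ ↦ hf.aestronglyMeasurable.aemeasurable)
  have hsum : (fun z ↦ ∑ i, f (z i)) = ∑ i, fun z : ι → α ↦ f (z i) := by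
    funext z; simp
  have hmean : ∫ z, ∑ i, f (z i) ∂P = Fintype.card ι * ∫ a, f a ∂m := by
    rw [integral_finsetSum _ (fun i _ ↦ (hmem i).integrable one_le_two)]
    simp [P, integral_comp_eval (μ := fun _ : ι ↦ m) hf.aestronglyMeasurable]
  have hvar : Var[fun z ↦ ∑ i, f (z i); P] = Fintype.card ι * Var[f; m] := by
    rw [hsum, IndepFun.variance_sum (fun i _ ↦ hmem i) (fun i _ j _ hij ↦ hindep.indepFun hij)]
    simp [(hpres _).variance_fun_comp hf.aestronglyMeasurable.aemeasurable]
  have hchebyshev := meas_ge_le_variance_div_sq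
    (hsum ▸ memLp_finsetSum' _ (fun i _ ↦ hmem i) : MemLp (fun z ↦ ∑ i, f (z i)) 2 P) hc
  rw [hmean, hvar] at hchebyshev
  exact ENNReal.toReal_le_of_le_ofReal (by have := variance_nonneg f m; positivity) hchebyshev

lemma measureReal_abs_sum_sq_sub_ge_le (v : ℝ≥0) {c : ℝ} (hc : 0 < c) :
    (Measure.pi fun _ : ι ↦ gaussianReal 0 v).real
        {x | c ≤ |∑ i, x i ^ 2 - Fintype.card ι * v|}
      ≤ 2 * Fintype.card ι * v ^ 2 / c ^ 2 := by
  have := measureReal_pi_abs_sum_sub_ge_le (ι := ι) (memLp_two_sq_gaussianReal 0 v) hc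
  rw [integral_sq_gaussianReal, variance_sq_gaussianReal] at this
  exact this.trans_eq (by ring)

lemma measureReal_abs_sum_mul_ge_le (v w : ℝ≥0) {c : ℝ} (hc : 0 < c) :
    ((Measure.pi fun _ : ι ↦ gaussianReal 0 v).prod (Measure.pi fun _ ↦ gaussianReal 0 w)).real
        {p | c ≤ |∑ i, p.1 i * p.2 i|}
      ≤ Fintype.card ι * v * w / c ^ 2 := by
  have := measureReal_pi_abs_sum_sub_ge_le (ι := ι) (memLp_two_mul_gaussianReal v w) hc
  rw [variance_mul_gaussianReal, integral_prod_mul (f := fun x ↦ x) (g := fun x ↦ x)] at this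
  simp only [integral_id_gaussianReal, mul_zero, sub_zero] at this
  -- Regrouped as `i ↦ (x i, y i)`, the pair of vectors has law `Π i, γ_v ⊗ γ_w`.
  rw [measureReal_def,
    ← (measurePreserving_arrowProdEquivProdArrow ℝ ℝ ι _ _).measure_preimage_equiv]
  exact this.trans_eq (by ring)

end Concentration

section CosineSimilarity

variable {ι : Type*} [Fintype ι]

noncomputable def cosineSimilarity (x y : ι → ℝ) : ℝ :=
  (∑ i, x i * y i) / (√(∑ i, x i ^ 2) * √(∑ i, y i ^ 2))

lemma measurable_cosineSimilarity :
    Measurable fun p : (ι → ℝ) × (ι → ℝ) ↦ cosineSimilarity p.1 p.2 := by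
  unfold cosineSimilarity
  fun_prop

lemma abs_cosineSimilarity_le {x y : ι → ℝ} {ε c : ℝ} (hc : 0 < c)
    (hxy : |∑ i, x i * y i| < ε * c) (hx : c < ∑ i, x i ^ 2) (hy : c < ∑ i, y i ^ 2) :
    |cosineSimilarity x y| ≤ ε := by
  have hc' : c ≤ √(∑ i, x i ^ 2) * √(∑ i, y i ^ 2) :=
    calc c = √c * √c := (Real.mul_self_sqrt hc.le).symm
      _ ≤ _ := by gcongr
  rw [cosineSimilarity, abs_div, abs_of_pos (hc.trans_le hc'), div_le_iff₀ (hc.trans_le hc')]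
  have hε : 0 < ε := pos_of_mul_pos_left ((abs_nonneg _).trans_lt hxy) hc.le
  exact hxy.le.trans (by gcongr)

lemma one_sub_le_measureReal_abs_cosineSimilarity_le [Nonempty ι] {ε : ℝ} (hε : 0 < ε) :
    1 - 4 / (Fintype.card ι * ε ^ 2) - 16 / Fintype.card ι ≤
      ((Measure.pi fun _ : ι ↦ gaussianReal 0 1).prod
        (Measure.pi fun _ ↦ gaussianReal 0 1)).real {p | |cosineSimilarity p.1 p.2| ≤ ε} := by
  set n : ℝ := (Fintype.card ι : ℝ)
  set γ := Measure.pi fun _ : ι ↦ gaussianReal 0 1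
  have hn : 0 < n := by simp [n, Fintype.card_pos]
  set G := {p : (ι → ℝ) × (ι → ℝ) | |cosineSimilarity p.1 p.2| ≤ ε}
  set B := {p : (ι → ℝ) × (ι → ℝ) | ε * (n / 2) ≤ |∑ i, p.1 i * p.2 i|}
  set C := {x : ι → ℝ | n / 2 ≤ |∑ i, x i ^ 2 - n|}
  have hcover : Set.univ ⊆ G ∪ B ∪ C ×ˢ Set.univ ∪ Set.univ ×ˢ C := by
    rintro ⟨x, y⟩ -
    by_contra! h
    simp only [Set.mem_union, Set.mem_prod, Set.mem_univ, and_true, true_and, not_or, G, B, C,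
      Set.mem_ofPred_eq, not_le] at h
    obtain ⟨⟨⟨hcos, hxy⟩, hx⟩, hy⟩ := h
    refine hcos.not_ge (abs_cosineSimilarity_le (by positivity) hxy ?_ ?_)
    · linarith [neg_abs_le (∑ i, x i ^ 2 - n)]
    · linarith [neg_abs_le (∑ i, y i ^ 2 - n)]
  have hB : (γ.prod γ).real B ≤ 4 / (n * ε ^ 2) := by
    have := measureReal_abs_sum_mul_ge_le (ι := ι) 1 1 (c := ε * (n / 2)) (by positivity)
    simp only [NNReal.coe_one, mul_one] at this
    refine this.trans_eq ?_
    field_simp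
    ring
  have hC : γ.real C ≤ 8 / n := by
    have := measureReal_abs_sum_sq_sub_ge_le (ι := ι) 1 (c := n / 2) (by positivity)
    simp only [NNReal.coe_one, mul_one, one_pow] at this
    refine this.trans_eq ?_
    field_simp
    ring
  have h₁ := measureReal_union_le (μ := γ.prod γ) (G ∪ B ∪ C ×ˢ Set.univ) (Set.univ ×ˢ C)
  have h₂ := measureReal_union_le (μ := γ.prod γ) (G ∪ B) (C ×ˢ Set.univ)
  have h₃ := measureReal_union_le (μ := γ.prod γ) G B
  have h₄ := measureReal_mono (μ := γ.prod γ) hcover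
  simp only [measureReal_prod_prod, probReal_univ, mul_one, one_mul] at h₁ h₂ h₄
  linarith [show (16 : ℝ) / n = 2 * (8 / n) by ring]

lemma four_div_add_sixteen_div_le {n ε : ℝ} (hn : 0 ≤ n) (hnε : 2 ≤ √n * ε)
    (hn' : 16 / 7 ≤ √n) : 4 / (n * ε ^ 2) + 16 / n ≤ 2 / (√n * ε) + 7 / √n := by
  conv_lhs => rw [← Real.sq_sqrt hn, ← mul_pow]
  have h₁ : 4 / (√n * ε) ^ 2 ≤ 2 / (√n * ε) := by
    rw [div_le_div_iff₀ (by positivity) (by positivity)]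
    nlinarith
  have h₂ : 16 / √n ^ 2 ≤ 7 / √n := by
    rw [div_le_div_iff₀ (by positivity) (by positivity)]
    nlinarith
  linarith

lemma le_measureReal_abs_cosineSimilarity_le [Nonempty ι] {ε : ℝ} (hε : 0 < ε) :
    1 - 2 / (√(Fintype.card ι) * ε) - 7 / √(Fintype.card ι) ≤
      ((Measure.pi fun _ : ι ↦ gaussianReal 0 1).prod
        (Measure.pi fun _ ↦ gaussianReal 0 1)).real {p | |cosineSimilarity p.1 p.2| ≤ ε} := by
  set n : ℝ := (Fintype.card ι : ℝ)
  by_cases htriv : 1 - 2 / (√n * ε) - 7 / √n ≤ 0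
  · exact htriv.trans measureReal_nonneg
  have hsqrt : 0 < √n := Real.sqrt_pos.2 (by simp [n, Fintype.card_pos])
  have hnε : 2 < √n * ε := by
    have : 2 / (√n * ε) < 1 := by linarith [show 0 < 7 / √n by positivity]
    rwa [div_lt_one (by positivity)] at this
  have hn' : 7 < √n := by
    have : 7 / √n < 1 := by linarith [show 0 < 2 / (√n * ε) by positivity]
    rwa [div_lt_one hsqrt] at this
  linarith [one_sub_le_measureReal_abs_cosineSimilarity_le (ι := ι) hε,
    four_div_add_sixteen_div_le (Nat.cast_nonneg _) hnε.le (by linarith)]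

end CosineSimilarity

/-- Two independent standard Gaussian random vectors in `ℝ^d` are nearly
orthogonal with high probability: their (normalized) cosine similarity is at
most `ε` in absolute value with probability at least `1 - 2/(√d·ε) - 7/√d`. -/
theorem stmt_16 {Ω : Type*} [MeasureSpace Ω]
    [IsProbabilityMeasure (volume : Measure Ω)]
    (d : ℕ) (hd : 1 ≤ d) (X Y : Ω → Fin d → ℝ)
    (hXY : IndepFun X Y volume)
    (hX : Measure.map X volume = Measure.pi fun _ : Fin d => gaussianReal 0 1)
    (hY : Measure.map Y volume = Measure.pi fun _ : Fin d => gaussianReal 0 1)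
    (ε : ℝ) (hε : 0 < ε) :
    1 - 2 / (Real.sqrt d * ε) - 7 / Real.sqrt d ≤
      (volume {ω |
        |(∑ i, X ω i * Y ω i) /
          (Real.sqrt (∑ i, (X ω i) ^ 2) * Real.sqrt (∑ i, (Y ω i) ^ 2))| ≤ ε}).toReal := by
  have hXm : AEMeasurable X := aemeasurable_of_map_neZero (by rw [hX]; infer_instance)
  have hYm : AEMeasurable Y := aemeasurable_of_map_neZero (by rw [hY]; infer_instance)
  have hlaw : volume.map (fun ω ↦ (X ω, Y ω)) =
      (Measure.pi fun _ : Fin d ↦ gaussianReal 0 1).prod (Measure.pi fun _ ↦ gaussianReal 0 1) := by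
    rw [(indepFun_iff_map_prod_eq_prod_map_map hXm hYm).1 hXY, hX, hY]
  have : Nonempty (Fin d) := ⟨⟨0, hd⟩⟩
  have hG : MeasurableSet {p : (Fin d → ℝ) × (Fin d → ℝ) | |cosineSimilarity p.1 p.2| ≤ ε} :=
    measurableSet_le measurable_cosineSimilarity.abs measurable_const
  have hbound := le_measureReal_abs_cosineSimilarity_le (ι := Fin d) hε
  rw [← hlaw, measureReal_def, Measure.map_apply_of_aemeasurable (hXm.prodMk hYm) hG] at hbound
  simpa [cosineSimilarity] using hbound
end
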